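/- The complex plane curve X = {(x, y) ∈ ℂ² : y² + x⁴ = 0} is not Lipschitz normally embedded at the origin: for every C > 0 and every ε > 0 there exist points p, q ∈ X with ‖p‖, ‖q‖ < ε and d_X(p, q) > C‖p − q‖. -/

import Mathlib

open Set Filter

/-- Inner (length) metric of a subset: infimum of lengths (total variations) of
continuous paths inside the set joining two points. -/
noncomputable def innerDist {E : Type*} [NormedAddCommGroup E] (X : Set E) (x y : E) : ENNReal :=
  ⨅ (γ : ℝ → E) (_ : ContinuousOn γ (Set.Icc 0 1)) (_ : Set.MapsTo γ (Set.Icc 0 1) X)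
    (_ : γ 0 = x) (_ : γ 1 = y), eVariationOn γ (Set.Icc 0 1)

theorem stmt11 :
    ∀ C : ℝ, 0 < C → ∀ ε : ℝ, 0 < ε →
      ∃ p ∈ {v : EuclideanSpace ℂ (Fin 2) | (v 1) ^ 2 + (v 0) ^ 4 = 0},
      ∃ q ∈ {v : EuclideanSpace ℂ (Fin 2) | (v 1) ^ 2 + (v 0) ^ 4 = 0},
        ‖p‖ < ε ∧ ‖q‖ < ε ∧
        ENNReal.ofReal (C * ‖p - q‖) <
          innerDist {v : EuclideanSpace ℂ (Fin 2) | (v 1) ^ 2 + (v 0) ^ 4 = 0} p q := by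
  intro C hC ε hε
  set X : Set (EuclideanSpace ℂ (Fin 2)) :=
    {v : EuclideanSpace ℂ (Fin 2) | (v 1) ^ 2 + (v 0) ^ 4 = 0} with hX
  set t : ℝ := min (ε / 2) (min (1 / (2 * C)) 1) with htdef
  have ht0 : 0 < t := by positivity
  have htε : t ≤ ε / 2 := min_le_left _ _
  have htC : t ≤ 1 / (2 * C) := le_trans (min_le_right _ _) (min_le_left _ _)
  have ht1 : t ≤ 1 := le_trans (min_le_right _ _) (min_le_right _ _)
  set p : EuclideanSpace ℂ (Fin 2) := WithLp.toLp 2 ![(t : ℂ), Complex.I * (t : ℂ) ^ 2] with hp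
  set q : EuclideanSpace ℂ (Fin 2) := WithLp.toLp 2 ![(t : ℂ), -(Complex.I * (t : ℂ) ^ 2)] with hq
  have hp0 : p 0 = (t : ℂ) := rfl
  have hp1 : p 1 = Complex.I * (t : ℂ) ^ 2 := rfl
  have hq0 : q 0 = (t : ℂ) := rfl
  have hq1 : q 1 = -(Complex.I * (t : ℂ) ^ 2) := rfl
  have hpX : p ∈ X := by
    simp only [hX, mem_setOf_eq, hp0, hp1]
    have := Complex.I_sq
    ring_nf
    linear_combination (t : ℂ) ^ 4 * Complex.I_sq
  have hqX : q ∈ X := by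
    simp only [hX, mem_setOf_eq, hq0, hq1]
    ring_nf
    linear_combination (t : ℂ) ^ 4 * Complex.I_sq
  -- norms
  have hnp : ‖p‖ = Real.sqrt (t ^ 2 + t ^ 4) := by
    rw [EuclideanSpace.norm_eq]
    congr 1
    rw [Fin.sum_univ_two, hp0, hp1]
    have h1 : ‖(t : ℂ)‖ = |t| := by rw [Complex.norm_real, Real.norm_eq_abs]
    have h2 : ‖Complex.I * (t : ℂ) ^ 2‖ = t ^ 2 := by
      rw [norm_mul, Complex.norm_I, one_mul, norm_pow, Complex.norm_real]
      rw [Real.norm_eq_abs, abs_of_pos ht0]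
    rw [h1, h2, sq_abs]
    ring
  have hnq : ‖q‖ = Real.sqrt (t ^ 2 + t ^ 4) := by
    rw [EuclideanSpace.norm_eq]
    congr 1
    rw [Fin.sum_univ_two, hq0, hq1]
    have h1 : ‖(t : ℂ)‖ = |t| := by rw [Complex.norm_real, Real.norm_eq_abs]
    have h2 : ‖-(Complex.I * (t : ℂ) ^ 2)‖ = t ^ 2 := by
      rw [norm_neg, norm_mul, Complex.norm_I, one_mul, norm_pow, Complex.norm_real]
      rw [Real.norm_eq_abs, abs_of_pos ht0]
    rw [h1, h2, sq_abs]
    ring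
  have hlt : Real.sqrt (t ^ 2 + t ^ 4) < ε := by
    have ht2 : t ^ 2 ≤ 1 := by nlinarith
    have h4 : t ^ 4 ≤ t ^ 2 := by nlinarith [mul_nonneg (sq_nonneg t) (sub_nonneg.mpr ht2)]
    have : t ^ 2 + t ^ 4 < (2 * t) ^ 2 := by nlinarith
    calc Real.sqrt (t ^ 2 + t ^ 4) < Real.sqrt ((2 * t) ^ 2) :=
          Real.sqrt_lt_sqrt (by positivity) this
      _ = 2 * t := Real.sqrt_sq (by positivity)
      _ ≤ ε := by linarith
  have hge : t ≤ Real.sqrt (t ^ 2 + t ^ 4) := by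
    calc t = Real.sqrt (t ^ 2) := (Real.sqrt_sq ht0.le).symm
      _ ≤ _ := Real.sqrt_le_sqrt (by nlinarith)
  have hpq : ‖p - q‖ = 2 * t ^ 2 := by
    have hsub0 : (p - q) 0 = 0 := by
      show p 0 - q 0 = 0
      rw [hp0, hq0]; ring
    have hsub1 : (p - q) 1 = 2 * Complex.I * (t : ℂ) ^ 2 := by
      show p 1 - q 1 = _
      rw [hp1, hq1]; ring
    rw [EuclideanSpace.norm_eq, Fin.sum_univ_two, hsub0, hsub1]
    have h2 : ‖2 * Complex.I * (t : ℂ) ^ 2‖ = 2 * t ^ 2 := by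
      rw [norm_mul, norm_mul, Complex.norm_I, norm_pow, Complex.norm_real]
      simp [Real.norm_eq_abs, abs_of_pos ht0]
    rw [h2]
    simp only [norm_zero]
    rw [show (0:ℝ) ^ 2 + (2 * t ^ 2) ^ 2 = (2 * t ^ 2) ^ 2 by ring]
    exact Real.sqrt_sq (by positivity)
  refine ⟨p, hpX, q, hqX, by rwa [hnp], by rwa [hnq], ?_⟩
  -- key inequality: innerDist ≥ ofReal (2 t)
  have key : ENNReal.ofReal (2 * t) ≤ innerDist X p q := by
    rw [innerDist]
    refine le_iInf fun γ => le_iInf fun hγc => le_iInf fun hγm => le_iInf fun hγ0 =>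
      le_iInf fun hγ1 => ?_
    -- branches
    set B₁ : Set (EuclideanSpace ℂ (Fin 2)) := {v | v 1 = Complex.I * (v 0) ^ 2} with hB₁
    set B₂ : Set (EuclideanSpace ℂ (Fin 2)) := {v | v 1 = -(Complex.I * (v 0) ^ 2)} with hB₂
    have hc1 : Continuous fun v : EuclideanSpace ℂ (Fin 2) => v 1 :=
      (EuclideanSpace.proj (1 : Fin 2) : EuclideanSpace ℂ (Fin 2) →L[ℂ] ℂ).continuous
    have hc0 : Continuous fun v : EuclideanSpace ℂ (Fin 2) => v 0 :=
      (EuclideanSpace.proj (0 : Fin 2) : EuclideanSpace ℂ (Fin 2) →L[ℂ] ℂ).continuous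
    have hB₁c : IsClosed B₁ := isClosed_eq hc1 (continuous_const.mul (hc0.pow 2))
    have hB₂c : IsClosed B₂ := isClosed_eq hc1 (continuous_const.mul (hc0.pow 2)).neg
    have hXsub : X ⊆ B₁ ∪ B₂ := by
      intro v hv
      have hv' : v 1 ^ 2 + v 0 ^ 4 = 0 := hv
      have hfact : (v 1 - Complex.I * (v 0) ^ 2) * (v 1 + Complex.I * (v 0) ^ 2) = 0 := by
        linear_combination hv' - (v 0) ^ 4 * Complex.I_sq
      rcases mul_eq_zero.mp hfact with h | h
      · left; exact sub_eq_zero.mp h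
      · right; exact eq_neg_of_add_eq_zero_left h
    -- the path must pass through the origin
    have hconn : (Icc (0:ℝ) 1 ∩ ((Icc (0:ℝ) 1 ∩ γ ⁻¹' B₁) ∩ (Icc (0:ℝ) 1 ∩ γ ⁻¹' B₂))).Nonempty := by
      apply isPreconnected_closed_iff.mp isPreconnected_Icc
      · exact hγc.preimage_isClosed_of_isClosed isClosed_Icc hB₁c
      · exact hγc.preimage_isClosed_of_isClosed isClosed_Icc hB₂c
      · intro s hs
        rcases hXsub (hγm hs) with h | h
        · exact Or.inl ⟨hs, h⟩
        · exact Or.inr ⟨hs, h⟩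
      · refine ⟨0, ⟨le_refl 0, zero_le_one⟩, ⟨le_refl 0, zero_le_one⟩, ?_⟩
        show γ 0 ∈ B₁
        rw [hγ0]
        show p 1 = Complex.I * (p 0) ^ 2
        rw [hp0, hp1]
      · refine ⟨1, ⟨zero_le_one, le_refl 1⟩, ⟨zero_le_one, le_refl 1⟩, ?_⟩
        show γ 1 ∈ B₂
        rw [hγ1]
        show q 1 = -(Complex.I * (q 0) ^ 2)
        rw [hq0, hq1]
    obtain ⟨s₀, hs₀I, ⟨_, hs₀1⟩, ⟨_, hs₀2⟩⟩ := hconn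
    have hz : γ s₀ 0 = 0 := by
      have h1 : γ s₀ 1 = Complex.I * (γ s₀ 0) ^ 2 := hs₀1
      have h2 : γ s₀ 1 = -(Complex.I * (γ s₀ 0) ^ 2) := hs₀2
      have : (2 : ℂ) * Complex.I * (γ s₀ 0) ^ 2 = 0 := by
        linear_combination h2 - h1
      have h3 : (γ s₀ 0) ^ 2 = 0 := by
        rcases mul_eq_zero.mp this with h | h
        · exact absurd h (by norm_num [Complex.I_ne_zero])
        · exact h
      exact (pow_eq_zero_iff (two_ne_zero)).mp h3
    have hzero : γ s₀ = 0 := by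
      ext j
      fin_cases j
      · exact hz
      · show γ s₀ 1 = 0
        rw [hs₀1, hz]; ring
    -- variation lower bound
    have hsplit : eVariationOn γ (Icc 0 1 ∩ Icc 0 s₀) + eVariationOn γ (Icc 0 1 ∩ Icc s₀ 1)
        = eVariationOn γ (Icc 0 1 ∩ Icc 0 1) :=
      eVariationOn.Icc_add_Icc γ hs₀I.1 hs₀I.2 hs₀I
    have h01 : (Icc (0:ℝ) 1 ∩ Icc 0 1) = Icc 0 1 := inter_self _
    have hle1 : edist (γ 0) (γ s₀) ≤ eVariationOn γ (Icc 0 1 ∩ Icc 0 s₀) :=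
      eVariationOn.edist_le γ ⟨⟨le_refl 0, zero_le_one⟩, le_refl 0, hs₀I.1⟩
        ⟨hs₀I, hs₀I.1, le_refl s₀⟩
    have hle2 : edist (γ s₀) (γ 1) ≤ eVariationOn γ (Icc 0 1 ∩ Icc s₀ 1) :=
      eVariationOn.edist_le γ ⟨hs₀I, le_refl s₀, hs₀I.2⟩
        ⟨⟨zero_le_one, le_refl 1⟩, hs₀I.2, le_refl 1⟩
    have hbig : ENNReal.ofReal (2 * t) ≤ edist (γ 0) (γ s₀) + edist (γ s₀) (γ 1) := by
      rw [hγ0, hγ1, hzero, edist_comm (0 : EuclideanSpace ℂ (Fin 2)) q,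
        edist_zero_right, edist_zero_right, enorm_eq_nnnorm, enorm_eq_nnnorm]
      have h1 : ENNReal.ofReal t ≤ (‖p‖₊ : ENNReal) := by
        rw [← enorm_eq_nnnorm, ← ofReal_norm]
        exact ENNReal.ofReal_le_ofReal (by rw [hnp]; exact hge)
      have h2 : ENNReal.ofReal t ≤ (‖q‖₊ : ENNReal) := by
        rw [← enorm_eq_nnnorm, ← ofReal_norm]
        exact ENNReal.ofReal_le_ofReal (by rw [hnq]; exact hge)
      calc ENNReal.ofReal (2 * t) = ENNReal.ofReal t + ENNReal.ofReal t := by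
            rw [← ENNReal.ofReal_add ht0.le ht0.le]; ring_nf
        _ ≤ (‖p‖₊ : ENNReal) + (‖q‖₊ : ENNReal) := add_le_add h1 h2
    calc ENNReal.ofReal (2 * t) ≤ edist (γ 0) (γ s₀) + edist (γ s₀) (γ 1) := hbig
      _ ≤ eVariationOn γ (Icc 0 1 ∩ Icc 0 s₀) + eVariationOn γ (Icc 0 1 ∩ Icc s₀ 1) :=
          add_le_add hle1 hle2
      _ = eVariationOn γ (Icc 0 1) := by rw [hsplit, h01]
  refine lt_of_lt_of_le ?_ key
  rw [hpq]
  rw [ENNReal.ofReal_lt_ofReal_iff (by positivity)]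
  have : C * t ≤ 1 / 2 := by
    calc C * t ≤ C * (1 / (2 * C)) := by nlinarith
      _ = 1 / 2 := by field_simp
  nlinarith [mul_pos hC ht0, sq_nonneg t]
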